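/- Let α ∈ (0,1), let k ≥ 2 and m ≥ 1 be integers with 2m ≤ k, and let θ ∈ ((2m−1)π, 2mπ). Define a(θ) = (2k)^α · sin(θ/(2k))^α · sin(θ + α(π/2 − θ/(2k))) / sin(θ) and b(θ) = −(2k)^α · sin(θ/(2k))^α · sin(απ/2 − αθ/(2k)) / sin(θ). Then b(θ) > 0 and a(θ) + b(θ) > 0; in particular this portion of the boundary-locus curve lies strictly above the line a + b = 0. -/

import Mathlib

open Real Set

/-!
Put `x = θ/(2k)` and `φ = α(π/2 − x)`, so that `0 < x < π/2`, `0 < φ < π/2`, and with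
`C = (2k)^α sin(x)^α > 0` one has `b = −C sin φ / sin θ` and `a + b = C (sin(θ + φ) − sin φ) / sin θ`.
Modulo `2π`, `θ` lies in `(−π, 0)`, hence `sin θ < 0`, and shifting `φ` down by an amount in
`(0, π)` strictly decreases its sine, hence `sin(θ + φ) < sin φ`.
-/

namespace Real

lemma sin_add_lt_sin {u φ : ℝ} (hu : u ∈ Ioo (-π) 0) (hφ : φ ∈ Ioc 0 (π / 2)) :
    sin (φ + u) < sin φ := by
  obtain ⟨hu₁, hu₂⟩ := hu
  obtain ⟨hφ₁, hφ₂⟩ := hφ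
  rcases le_or_gt (φ + u) 0 with h | h
  · calc sin (φ + u) ≤ 0 := sin_nonpos_of_nonpos_of_neg_pi_le h (by linarith)
      _ < sin φ := sin_pos_of_pos_of_lt_pi hφ₁ (by linarith [pi_pos])
  · exact strictMonoOn_sin ⟨by linarith, by linarith⟩ ⟨by linarith, hφ₂⟩ (by linarith)

lemma sub_int_mul_two_pi_mem_Ioo {θ : ℝ} {m : ℤ} (hθ : θ ∈ Ioo ((2 * m - 1) * π) (2 * m * π)) :
    θ - m * (2 * π) ∈ Ioo (-π) 0 :=
  ⟨by linarith [hθ.1], by linarith [hθ.2]⟩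

lemma sin_neg_of_mem_Ioo {θ : ℝ} {m : ℤ} (hθ : θ ∈ Ioo ((2 * m - 1) * π) (2 * m * π)) :
    sin θ < 0 := by
  obtain ⟨hu₁, hu₂⟩ := sub_int_mul_two_pi_mem_Ioo hθ
  simpa only [sin_sub_int_mul_two_pi] using sin_neg_of_neg_of_neg_pi_lt hu₂ hu₁

lemma sin_add_lt_sin_of_mem_Ioo {θ φ : ℝ} {m : ℤ}
    (hθ : θ ∈ Ioo ((2 * m - 1) * π) (2 * m * π)) (hφ : φ ∈ Ioc 0 (π / 2)) :
    sin (θ + φ) < sin φ := by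
  have h := sin_add_lt_sin (sub_int_mul_two_pi_mem_Ioo hθ) hφ
  rwa [← add_sub_assoc, add_comm φ, sin_sub_int_mul_two_pi] at h

end Real

lemma neg_div_pos_and_div_add_neg_div_pos {C s t σ : ℝ} (hC : 0 < C) (hσ : σ < 0)
    (hs : 0 < s) (hts : t < s) :
    0 < -(C * s / σ) ∧ 0 < C * t / σ + -(C * s / σ) := by
  refine ⟨neg_pos.2 (div_neg_of_pos_of_neg (mul_pos hC hs) hσ), ?_⟩
  rw [← sub_eq_add_neg, ← sub_div, ← mul_sub]
  exact div_pos_of_neg_of_neg (mul_neg_of_pos_of_neg hC (sub_neg.2 hts)) hσ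

lemma div_two_mul_mem_Ioo {θ k : ℝ} (hθ₀ : 0 < θ) (hθk : θ < k * π) :
    θ / (2 * k) ∈ Ioo 0 (π / 2) := by
  have hk : 0 < 2 * k := by nlinarith [pi_pos]
  refine ⟨div_pos hθ₀ hk, ?_⟩
  rw [div_lt_iff₀ hk]
  linarith

theorem gl_even_arcs_above_diagonal (α : ℝ) (hα : α ∈ Set.Ioo (0:ℝ) 1)
    (k m : ℕ) (hm : 1 ≤ m) (h2m : 2 * m ≤ k)
    (θ : ℝ) (hθ : θ ∈ Set.Ioo ((2 * (m:ℝ) - 1) * π) (2 * (m:ℝ) * π)) :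
    0 < -((2 * (k:ℝ)) ^ α * Real.sin (θ / (2 * (k:ℝ))) ^ α *
        Real.sin (α * π / 2 - α * θ / (2 * (k:ℝ))) / Real.sin θ) ∧
      0 < (2 * (k:ℝ)) ^ α * Real.sin (θ / (2 * (k:ℝ))) ^ α *
          Real.sin (θ + α * (π / 2 - θ / (2 * (k:ℝ)))) / Real.sin θ +
        -((2 * (k:ℝ)) ^ α * Real.sin (θ / (2 * (k:ℝ))) ^ α *
          Real.sin (α * π / 2 - α * θ / (2 * (k:ℝ))) / Real.sin θ) := by
  obtain ⟨hα₀, hα₁⟩ := hα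
  have hθℤ : θ ∈ Ioo ((2 * ((m : ℤ) : ℝ) - 1) * π) (2 * ((m : ℤ) : ℝ) * π) := by
    exact_mod_cast hθ
  have hmR : (1 : ℝ) ≤ m := by exact_mod_cast hm
  have h2mR : 2 * (m : ℝ) ≤ k := by exact_mod_cast h2m
  obtain ⟨hx₀, hx₁⟩ : θ / (2 * k) ∈ Ioo 0 (π / 2) :=
    div_two_mul_mem_Ioo (by nlinarith [hθ.1, pi_pos]) (by nlinarith [hθ.2, pi_pos])
  have hφ : α * (π / 2 - θ / (2 * k)) ∈ Ioc 0 (π / 2) :=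
    ⟨by nlinarith, by nlinarith⟩
  set φ := α * (π / 2 - θ / (2 * k))
  rw [show α * π / 2 - α * θ / (2 * k) = φ by ring]
  exact neg_div_pos_and_div_add_neg_div_pos
    (mul_pos (rpow_pos_of_pos (by linarith) α)
      (rpow_pos_of_pos (sin_pos_of_pos_of_lt_pi hx₀ (by linarith)) α))
    (sin_neg_of_mem_Ioo hθℤ) (sin_pos_of_pos_of_lt_pi hφ.1 (by linarith [hφ.2, pi_pos]))
    (sin_add_lt_sin_of_mem_Ioo hθℤ hφ)
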